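/- Let (u_κ, ξ⃗_κ) be the unique solution of the penalized mixed problem (Problem Q_κ). Then ‖ξ⃗_κ‖_{H¹₀(ω)²} ≤ c_P² ‖F⃗‖_{L²(ω)²}, ‖{u_κ−θ}⁻‖_{L²(ω)} ≤ c_P‖F⃗‖_{L²}√κ, ‖ξ⃗_κ − ∇u_κ‖_{L²(ω)²} ≤ c_P‖F⃗‖_{L²}√κ, and ‖u_κ‖_{H¹₀(ω)} ≤ c_P²‖F⃗‖_{L²}(√κ + c_P); in particular all these families are bounded uniformly in κ. -/

import Mathlib

/-!
Testing the variational equation with `(u, ξ)` itself gives, with `n = {u - θ}⁻`,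
`κ‖∇u‖² + ‖∇ξ‖² + κ⁻¹‖n‖² + κ⁻¹‖∇u - ξ‖² ≤ ‖F‖ ‖ξ‖_{L²}`: the penalty term has a sign because
`n u + n² = n θ ≤ 0` as `θ ≤ 0`. Poincaré–Friedrichs bounds `‖ξ‖_{L²} ≤ c_P ‖∇ξ‖`, so
`‖∇ξ‖ ≤ c_P ‖F‖` and every term on the left is at most `c_P² ‖F‖²`. Finally
`‖u‖ ≤ c_P ‖∇u‖ ≤ c_P (‖∇u - ξ‖ + ‖ξ‖_{L²})`.
-/

noncomputable section
open MeasureTheory Real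

abbrev E2 := EuclideanSpace ℝ (Fin 2)

def pd (i : Fin 2) (f : E2 → ℝ) (x : E2) : ℝ :=
  fderiv ℝ f x (EuclideanSpace.single i 1)

def negPartF (f : E2 → ℝ) : E2 → ℝ := fun y => -min (f y) 0

/-- The variational equation of the penalized mixed problem `Q_κ`. -/
def MixedEq (ω : Set E2) (θ : E2 → ℝ) (F : Fin 2 → E2 → ℝ) (κ : ℝ)
    {H : Type*} [NormedAddCommGroup H] [InnerProductSpace ℝ H]
    (ι : H →ₗ[ℝ] (E2 → ℝ)) (u : H) (ξ : Fin 2 → H) (v : H) (η : Fin 2 → H) : Prop :=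
  κ * (∫ y in ω, ∑ i : Fin 2, pd i (ι u) y * pd i (ι v) y)
    + (∫ y in ω, ∑ α : Fin 2, ∑ β : Fin 2, pd α (ι (ξ β)) y * pd α (ι (η β)) y)
    - (1 / κ) * (∫ y in ω, negPartF (fun x => ι u x - θ x) y * ι v y)
    + (1 / κ) * (∫ y in ω, ∑ i : Fin 2,
        (pd i (ι u) y - ι (ξ i) y) * (pd i (ι v) y - ι (η i) y))
  = - ∫ y in ω, ∑ i : Fin 2, F i y * ι (η i) y

section SquareIntegrable

variable {α J : Type*} [MeasurableSpace α] {μ : Measure α} [Fintype J]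

theorem integral_mul_le_sqrt_mul_sqrt {f g : α → ℝ} (hf : MemLp f 2 μ) (hg : MemLp g 2 μ) :
    ∫ a, f a * g a ∂μ ≤ √(∫ a, f a ^ 2 ∂μ) * √(∫ a, g a ^ 2 ∂μ) := by
  have holder := integral_mul_norm_le_Lp_mul_Lq Real.HolderConjugate.two_two
    (by rwa [ENNReal.ofReal_ofNat] : MemLp f (ENNReal.ofReal 2) μ)
    (by rwa [ENNReal.ofReal_ofNat] : MemLp g (ENNReal.ofReal 2) μ)
  simp only [Real.rpow_two, Real.norm_eq_abs, sq_abs, ← Real.sqrt_eq_rpow] at holder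
  calc ∫ a, f a * g a ∂μ ≤ ∫ a, |f a| * |g a| ∂μ :=
        integral_mono (hf.integrable_mul hg) (hf.abs.integrable_mul hg.abs)
          fun a => (le_abs_self _).trans (abs_mul _ _).le
    _ ≤ _ := holder

theorem integral_sum_mul_le_sqrt_mul_sqrt {f g : J → α → ℝ} (hf : ∀ i, MemLp (f i) 2 μ)
    (hg : ∀ i, MemLp (g i) 2 μ) :
    ∫ a, ∑ i, f i a * g i a ∂μ ≤ √(∫ a, ∑ i, f i a ^ 2 ∂μ) * √(∫ a, ∑ i, g i a ^ 2 ∂μ) := by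
  rw [integral_finsetSum (f := fun i a => f i a * g i a) _ fun i _ => (hf i).integrable_mul (hg i),
    integral_finsetSum _ fun i _ => (hf i).integrable_sq,
    integral_finsetSum _ fun i _ => (hg i).integrable_sq]
  exact (Finset.sum_le_sum fun i _ => integral_mul_le_sqrt_mul_sqrt (hf i) (hg i)).trans
    (Real.sum_sqrt_mul_sqrt_le _ (fun i => integral_nonneg fun a => sq_nonneg _)
      (fun i => integral_nonneg fun a => sq_nonneg _))

theorem sqrt_integral_sum_add_sq_le {f g : J → α → ℝ} (hf : ∀ i, MemLp (f i) 2 μ)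
    (hg : ∀ i, MemLp (g i) 2 μ) :
    √(∫ a, ∑ i, (f i a + g i a) ^ 2 ∂μ)
      ≤ √(∫ a, ∑ i, f i a ^ 2 ∂μ) + √(∫ a, ∑ i, g i a ^ 2 ∂μ) := by
  have hf2 : Integrable (fun a => ∑ i, f i a ^ 2) μ :=
    integrable_finsetSum _ fun i _ => (hf i).integrable_sq
  have hg2 : Integrable (fun a => ∑ i, g i a ^ 2) μ :=
    integrable_finsetSum _ fun i _ => (hg i).integrable_sq
  have hfg : Integrable (fun a => 2 * ∑ i, f i a * g i a) μ :=
    (integrable_finsetSum _ fun i _ => (hf i).integrable_mul (hg i)).const_mul 2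
  have hexpand : ∫ a, ∑ i, (f i a + g i a) ^ 2 ∂μ
      = ∫ a, ∑ i, f i a ^ 2 ∂μ + 2 * ∫ a, ∑ i, f i a * g i a ∂μ + ∫ a, ∑ i, g i a ^ 2 ∂μ := by
    have hpt : ∀ a, ∑ i, (f i a + g i a) ^ 2
        = (∑ i, f i a ^ 2 + 2 * ∑ i, f i a * g i a) + ∑ i, g i a ^ 2 := fun a => by
      simp only [add_sq, Finset.sum_add_distrib, Finset.mul_sum, mul_assoc]
    simp_rw [hpt]
    rw [integral_add (f := fun a => ∑ i, f i a ^ 2 + 2 * ∑ i, f i a * g i a) (hf2.add hfg) hg2,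
      integral_add hf2 hfg, integral_const_mul]
  have hcs := integral_sum_mul_le_sqrt_mul_sqrt hf hg
  have hP : √(∫ a, ∑ i, f i a ^ 2 ∂μ) ^ 2 = ∫ a, ∑ i, f i a ^ 2 ∂μ :=
    Real.sq_sqrt (integral_nonneg fun a => by positivity)
  have hQ : √(∫ a, ∑ i, g i a ^ 2 ∂μ) ^ 2 = ∫ a, ∑ i, g i a ^ 2 ∂μ :=
    Real.sq_sqrt (integral_nonneg fun a => by positivity)
  rw [Real.sqrt_le_left (by positivity), hexpand]
  nlinarith

end SquareIntegrable

theorem sqrt_le_of_le_mul_sqrt {x c : ℝ} (hc : 0 ≤ c) (h : x ≤ c * √x) : √x ≤ c := by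
  rcases le_or_gt x 0 with hx | hx
  · rwa [Real.sqrt_eq_zero'.2 hx]
  · have hsq := Real.sq_sqrt hx.le
    nlinarith [Real.sqrt_pos.2 hx]

theorem sqrt_le_mul_sqrt_of_le_sq_mul {x y c : ℝ} (hc : 0 ≤ c) (h : x ≤ c ^ 2 * y) :
    √x ≤ c * √y :=
  (Real.sqrt_le_sqrt h).trans_eq (by rw [Real.sqrt_mul (sq_nonneg c), Real.sqrt_sq hc])

theorem sqrt_le_mul_sqrt_of_inv_mul_le {x κ c : ℝ} (hκ : 0 < κ) (hc : 0 ≤ c)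
    (h : 1 / κ * x ≤ c ^ 2) : √x ≤ c * √κ := by
  rw [one_div, inv_mul_le_iff₀ hκ] at h
  exact sqrt_le_mul_sqrt_of_le_sq_mul hc (by linarith)

theorem penalized_energy_bounds {κ A B N D c : ℝ} (hκ : 0 < κ) (hA : 0 ≤ A) (hB : 0 ≤ B)
    (hN : 0 ≤ N) (hD : 0 ≤ D) (hc : 0 ≤ c) (h : κ * A + B + 1 / κ * N + 1 / κ * D ≤ c * √B) :
    √B ≤ c ∧ √N ≤ c * √κ ∧ √D ≤ c * √κ := by
  have hκA := mul_nonneg hκ.le hA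
  have hN' := mul_nonneg (one_div_pos.2 hκ).le hN
  have hD' := mul_nonneg (one_div_pos.2 hκ).le hD
  have hBc : √B ≤ c := sqrt_le_of_le_mul_sqrt hc (by linarith)
  have hcB : c * √B ≤ c ^ 2 := by nlinarith
  exact ⟨hBc, sqrt_le_mul_sqrt_of_inv_mul_le hκ hc (by linarith),
    sqrt_le_mul_sqrt_of_inv_mul_le hκ hc (by linarith)⟩

section Penalty

variable {f θ : E2 → ℝ} {y : E2}

theorem negPartF_sub_mul_le (hθ : θ y ≤ 0) :
    negPartF (fun x => f x - θ x) y * f y ≤ -negPartF (fun x => f x - θ x) y ^ 2 := by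
  simp only [negPartF]
  rcases le_total (f y - θ y) 0 with h | h
  · rw [min_eq_left h]
    nlinarith
  · simp [min_eq_right h]

theorem abs_negPartF_sub_le (hθ : θ y ≤ 0) : |negPartF (fun x => f x - θ x) y| ≤ |f y| := by
  simp only [negPartF]
  rcases le_total (f y - θ y) 0 with h | h
  · rw [min_eq_left h, abs_le]
    constructor <;> cases abs_cases (f y) <;> linarith
  · simp [min_eq_right h]

theorem MeasureTheory.MemLp.negPartF_sub {μ : Measure E2} {p : ENNReal} (hf : MemLp f p μ)
    (hθ : AEStronglyMeasurable θ μ) (hθ0 : ∀ᵐ y ∂μ, θ y ≤ 0) :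
    MemLp (negPartF fun x => f x - θ x) p μ :=
  hf.of_le ((continuous_id.min continuous_const).neg.comp_aestronglyMeasurable (hf.1.sub hθ))
    (hθ0.mono fun _ hy => abs_negPartF_sub_le hy)

end Penalty

section Poincare

variable {H J : Type*} [SeminormedAddCommGroup H] [Fintype J] {ι : H → E2 → ℝ}
  {μ : Measure E2} {c : ℝ}

theorem sum_norm_sq_le_mul_integral_sum_sum (hgrad : ∀ v i, MemLp (pd i (ι v)) 2 μ)
    (hPF : ∀ v, ‖v‖ ≤ c * √(∫ y, ∑ i, pd i (ι v) y ^ 2 ∂μ)) (ξ : J → H) :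
    ∑ j, ‖ξ j‖ ^ 2 ≤ c ^ 2 * ∫ y, ∑ i, ∑ j, pd i (ι (ξ j)) y ^ 2 ∂μ := by
  have hswap : ∫ y, ∑ i, ∑ j, pd i (ι (ξ j)) y ^ 2 ∂μ
      = ∑ j, ∫ y, ∑ i, pd i (ι (ξ j)) y ^ 2 ∂μ := by
    simp_rw [Finset.sum_comm (γ := Fin 2)]
    exact integral_finsetSum _ fun j _ =>
      integrable_finsetSum _ fun i _ => (hgrad (ξ j) i).integrable_sq
  rw [hswap, Finset.mul_sum]
  refine Finset.sum_le_sum fun j _ => ?_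
  calc ‖ξ j‖ ^ 2 ≤ (c * √(∫ y, ∑ i, pd i (ι (ξ j)) y ^ 2 ∂μ)) ^ 2 :=
        pow_le_pow_left₀ (norm_nonneg _) (hPF (ξ j)) 2
    _ = _ := by rw [mul_pow, Real.sq_sqrt (integral_nonneg fun y => by positivity)]

theorem integral_sum_sq_le_sum_norm_sq (hL2 : ∀ v, MemLp (ι v) 2 μ)
    (hL2le : ∀ v, √(∫ y, ι v y ^ 2 ∂μ) ≤ ‖v‖) (ξ : J → H) :
    ∫ y, ∑ j, ι (ξ j) y ^ 2 ∂μ ≤ ∑ j, ‖ξ j‖ ^ 2 := by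
  rw [integral_finsetSum _ fun j _ => (hL2 (ξ j)).integrable_sq]
  exact Finset.sum_le_sum fun j _ => (Real.sqrt_le_left (norm_nonneg _)).1 (hL2le (ξ j))

end Poincare

section MixedProblem

variable {ω : Set E2} {θ : E2 → ℝ} {F : Fin 2 → E2 → ℝ} {κ : ℝ} {H : Type*}
  [NormedAddCommGroup H] [InnerProductSpace ℝ H] {ι : H →ₗ[ℝ] (E2 → ℝ)} {u : H} {ξ : Fin 2 → H}

theorem MixedEq.energy_le (hsol : MixedEq ω θ F κ ι u ξ u ξ) (hκ : 0 < κ)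
    (hu : MemLp (ι u) 2 (volume.restrict ω)) (hξ : ∀ i, MemLp (ι (ξ i)) 2 (volume.restrict ω))
    (hθ : AEStronglyMeasurable θ (volume.restrict ω)) (hθ0 : ∀ᵐ y ∂volume.restrict ω, θ y ≤ 0)
    (hF : ∀ i, MemLp (F i) 2 (volume.restrict ω)) :
    κ * (∫ y in ω, ∑ i, pd i (ι u) y ^ 2)
      + (∫ y in ω, ∑ α, ∑ β, pd α (ι (ξ β)) y ^ 2)
      + 1 / κ * (∫ y in ω, negPartF (fun x => ι u x - θ x) y ^ 2)
      + 1 / κ * (∫ y in ω, ∑ i, (pd i (ι u) y - ι (ξ i) y) ^ 2)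
    ≤ √(∫ y in ω, ∑ i, F i y ^ 2) * √(∫ y in ω, ∑ i, ι (ξ i) y ^ 2) := by
  have hn := hu.negPartF_sub hθ hθ0
  have hpenalty : ∫ y in ω, negPartF (fun x => ι u x - θ x) y * ι u y
      ≤ -∫ y in ω, negPartF (fun x => ι u x - θ x) y ^ 2 := by
    rw [← integral_neg]
    exact integral_mono_ae (hn.integrable_mul hu) hn.integrable_sq.neg
      (hθ0.mono fun y hy => negPartF_sub_mul_le hy)
  have hforce : -∫ y in ω, ∑ i, F i y * ι (ξ i) y
      ≤ √(∫ y in ω, ∑ i, F i y ^ 2) * √(∫ y in ω, ∑ i, ι (ξ i) y ^ 2) := by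
    simpa [← integral_neg, neg_sq, Finset.sum_neg_distrib] using
      integral_sum_mul_le_sqrt_mul_sqrt hF fun i => (hξ i).neg
  unfold MixedEq at hsol
  simp only [← pow_two] at hsol
  have := mul_le_mul_of_nonneg_left hpenalty (one_div_pos.2 hκ).le
  linarith

end MixedProblem

theorem stmt_10_general
    (ω : Set E2)
    (H : Type*) [NormedAddCommGroup H] [InnerProductSpace ℝ H]
    (ι : H →ₗ[ℝ] (E2 → ℝ))
    (hL2 : ∀ v : H, MemLp (ι v) 2 (volume.restrict ω))
    (hgradL2 : ∀ v : H, ∀ i, MemLp (pd i (ι v)) 2 (volume.restrict ω))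
    (cP : ℝ) (hcP : 0 < cP)
    (hPF : ∀ v : H, ‖v‖ ≤ cP *
      Real.sqrt (∫ y in ω, ∑ i : Fin 2, (pd i (ι v) y) ^ 2))
    (hL2le : ∀ v : H, Real.sqrt (∫ y in ω, (ι v y) ^ 2) ≤ ‖v‖)
    (θ : E2 → ℝ) (hθ : ContinuousOn θ (closure ω)) (hθneg : ∀ y ∈ closure ω, θ y < 0)
    (F : Fin 2 → E2 → ℝ) (hF : ∀ i, MemLp (F i) 2 (volume.restrict ω))
    (κ : ℝ) (hκ : 0 < κ)
    (u : H) (ξ : Fin 2 → H)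
    (hsol : ∀ (v : H) (η : Fin 2 → H), MixedEq ω θ F κ ι u ξ v η) :
    Real.sqrt (∑ i : Fin 2, ‖ξ i‖ ^ 2)
        ≤ cP ^ 2 * Real.sqrt (∫ y in ω, ∑ i : Fin 2, (F i y) ^ 2) ∧
    Real.sqrt (∫ y in ω, (negPartF (fun x => ι u x - θ x) y) ^ 2)
        ≤ cP * Real.sqrt (∫ y in ω, ∑ i : Fin 2, (F i y) ^ 2) * Real.sqrt κ ∧
    Real.sqrt (∫ y in ω, ∑ i : Fin 2, (ι (ξ i) y - pd i (ι u) y) ^ 2)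
        ≤ cP * Real.sqrt (∫ y in ω, ∑ i : Fin 2, (F i y) ^ 2) * Real.sqrt κ ∧
    ‖u‖ ≤ cP ^ 2 * Real.sqrt (∫ y in ω, ∑ i : Fin 2, (F i y) ^ 2) * (Real.sqrt κ + cP) := by
  set M := √(∫ y in ω, ∑ i, F i y ^ 2)
  have hclosure : ∀ᵐ y ∂volume.restrict ω, y ∈ closure ω :=
    ae_restrict_of_ae_restrict_of_subset subset_closure
      (ae_restrict_mem isClosed_closure.measurableSet)
  have hθmeas : AEStronglyMeasurable θ (volume.restrict ω) :=
    (hθ.aestronglyMeasurable isClosed_closure.measurableSet).mono_measure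
      (Measure.restrict_mono subset_closure le_rfl)
  have hξ := sum_norm_sq_le_mul_integral_sum_sum hgradL2 hPF ξ
  have hGB : √(∫ y in ω, ∑ i, ι (ξ i) y ^ 2)
      ≤ cP * √(∫ y in ω, ∑ α, ∑ β, pd α (ι (ξ β)) y ^ 2) :=
    sqrt_le_mul_sqrt_of_le_sq_mul hcP.le ((integral_sum_sq_le_sum_norm_sq hL2 hL2le ξ).trans hξ)
  have henergy := (hsol u ξ).energy_le hκ (hL2 u) (fun i => hL2 (ξ i)) hθmeas
    (hclosure.mono fun y hy => (hθneg y hy).le) hF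
  obtain ⟨hB, hN, hD⟩ := penalized_energy_bounds (c := cP * M) hκ
    (integral_nonneg fun y => by positivity) (integral_nonneg fun y => by positivity)
    (integral_nonneg fun y => by positivity) (integral_nonneg fun y => by positivity)
    (by positivity)
    (henergy.trans ((mul_le_mul_of_nonneg_left hGB (by positivity)).trans_eq (by ring)))
  have hA := sqrt_integral_sum_add_sq_le (fun i => (hgradL2 u i).sub (hL2 (ξ i)))
    (fun i => hL2 (ξ i))
  simp only [Pi.sub_apply, sub_add_cancel] at hA
  refine ⟨?_, hN, by simpa only [sub_sq_comm] using hD, ?_⟩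
  · calc √(∑ i, ‖ξ i‖ ^ 2) ≤ cP * √(∫ y in ω, ∑ α, ∑ β, pd α (ι (ξ β)) y ^ 2) :=
          sqrt_le_mul_sqrt_of_le_sq_mul hcP.le hξ
      _ ≤ cP ^ 2 * M := by nlinarith
  · calc ‖u‖ ≤ cP * √(∫ y in ω, ∑ i, pd i (ι u) y ^ 2) := hPF u
      _ ≤ cP * (cP * M * √κ + cP * (cP * M)) := by
          gcongr
          exact hA.trans (add_le_add hD (hGB.trans (by gcongr)))
      _ = cP ^ 2 * M * (√κ + cP) := by ring

/-- a priori estimates for the solution `(u_κ, ξ⃗_κ)` of the penalized mixed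
problem `Q_κ`: `‖ξ⃗_κ‖_{H¹₀²} ≤ c_P²‖F⃗‖`, `‖{u_κ−θ}⁻‖_{L²} ≤ c_P‖F⃗‖√κ`,
`‖ξ⃗_κ − ∇u_κ‖_{L²} ≤ c_P‖F⃗‖√κ` and `‖u_κ‖_{H¹₀} ≤ c_P²‖F⃗‖(√κ + c_P)`; in particular all
these families are bounded uniformly in `κ`.  `H` plays the role of `H¹₀(ω)` via `ι`, and `c_P`
is the Poincaré–Friedrichs constant. -/
theorem stmt_10
    (ω : Set E2) (hω : IsOpen ω) (hbd : Bornology.IsBounded ω)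
    (H : Type*) [NormedAddCommGroup H] [InnerProductSpace ℝ H] [CompleteSpace H]
    (ι : H →ₗ[ℝ] (E2 → ℝ))
    (hL2 : ∀ v : H, MemLp (ι v) 2 (volume.restrict ω))
    (hgradL2 : ∀ v : H, ∀ i, MemLp (pd i (ι v)) 2 (volume.restrict ω))
    (cP : ℝ) (hcP : 0 < cP)
    (hPF : ∀ v : H, ‖v‖ ≤ cP *
      Real.sqrt (∫ y in ω, ∑ i : Fin 2, (pd i (ι v) y) ^ 2))
    (hL2le : ∀ v : H, Real.sqrt (∫ y in ω, (ι v y) ^ 2) ≤ ‖v‖)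
    (θ : E2 → ℝ) (hθ : ContinuousOn θ (closure ω)) (hθneg : ∀ y ∈ closure ω, θ y < 0)
    (F : Fin 2 → E2 → ℝ) (hF : ∀ i, MemLp (F i) 2 (volume.restrict ω))
    (κ : ℝ) (hκ : 0 < κ)
    (u : H) (ξ : Fin 2 → H)
    (hsol : ∀ (v : H) (η : Fin 2 → H), MixedEq ω θ F κ ι u ξ v η) :
    Real.sqrt (∑ i : Fin 2, ‖ξ i‖ ^ 2)
        ≤ cP ^ 2 * Real.sqrt (∫ y in ω, ∑ i : Fin 2, (F i y) ^ 2) ∧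
    Real.sqrt (∫ y in ω, (negPartF (fun x => ι u x - θ x) y) ^ 2)
        ≤ cP * Real.sqrt (∫ y in ω, ∑ i : Fin 2, (F i y) ^ 2) * Real.sqrt κ ∧
    Real.sqrt (∫ y in ω, ∑ i : Fin 2, (ι (ξ i) y - pd i (ι u) y) ^ 2)
        ≤ cP * Real.sqrt (∫ y in ω, ∑ i : Fin 2, (F i y) ^ 2) * Real.sqrt κ ∧
    ‖u‖ ≤ cP ^ 2 * Real.sqrt (∫ y in ω, ∑ i : Fin 2, (F i y) ^ 2) * (Real.sqrt κ + cP) :=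
  stmt_10_general ω H ι hL2 hgradL2 cP hcP hPF hL2le θ hθ hθneg F hF κ hκ u ξ hsol
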